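/- For any m ∈ ℝ and B > 0, the Mullins grain-boundary-groove profile y₀(x,t) satisfies Mullins' linear surface-diffusion equation ∂y₀/∂t(x,t) = −B ∂⁴y₀/∂x⁴(x,t) at every point (x,t) with x > 0 and t > 0. -/

import Mathlib

/-!
Expanding the two ₁F₃ series, `y₀ = m x / 2 + S₁ + S₂` where each `Sᵢ` has the self-similar form
`t ^ e * x ^ j * ∑ c k * (x ^ 4 / t) ^ k = ∑ c k * t ^ (e - k) * x ^ (4 k + j)` with `j < 4` and
coefficients decaying like `r ^ k / k!`. Such series are entire in `x` and in `1 / t`, so they can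
be differentiated termwise. Then `∂ₜ` multiplies the `k`-th term by `(e - k) / t`, while `∂ₓ⁴`
kills the lowest monomial and sends the `(k+1)`-st term to a multiple of the `k`-th one, so the
equation `∂ₜ y = -B ∂ₓ⁴ y` becomes a two-term recurrence for `c k`. For the coefficients of the
Mullins profile it is exactly the Pochhammer recurrence of the ₁F₃ coefficients.
-/

/-- Pochhammer symbol (rising factorial) `(a)_k = a(a+1)⋯(a+k-1)`. -/
noncomputable def poch (a : ℝ) (k : ℕ) : ℝ := ∏ i ∈ Finset.range k, (a + (i : ℝ))

/-- Generalized hypergeometric function `₁F₃(a; b₁, b₂, b₃; z)`. -/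
noncomputable def F13 (a b₁ b₂ b₃ z : ℝ) : ℝ :=
  ∑' k : ℕ, poch a k / (poch b₁ k * poch b₂ k * poch b₃ k) * z ^ k / (Nat.factorial k)

/-- The Mullins grain-boundary-groove profile `y₀(x,t)`. -/
noncomputable def mullinsY (m B x t : ℝ) : ℝ :=
  m / 2 * x
  - m * x ^ 2 / (4 * Real.sqrt 2 * (B * t) ^ ((1:ℝ)/4) * Real.Gamma (3/4)) *
      F13 (1/4) (3/4) (5/4) (3/2) (x ^ 4 / (256 * B * t))
  - m * (B * t) ^ ((1:ℝ)/4) / (2 * Real.sqrt 2 * Real.Gamma (5/4)) *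
      F13 (-1/4) (1/4) (1/2) (3/4) (x ^ 4 / (256 * B * t))

open Nat Topology

def HasFactorialDecay (c : ℕ → ℝ) : Prop := ∃ C r : ℝ, ∀ k, |c k| ≤ C * r ^ k / k !

theorem HasFactorialDecay.mul_pow {c : ℕ → ℝ} (hc : HasFactorialDecay c) (u v : ℝ) :
    HasFactorialDecay fun k => u * c k * v ^ k := by
  obtain ⟨C, r, hc⟩ := hc
  refine ⟨|u| * C, r * |v|, fun k => ?_⟩
  rw [abs_mul, abs_mul, abs_pow, _root_.mul_pow]
  calc |u| * |c k| * |v| ^ k ≤ |u| * (C * r ^ k / k !) * |v| ^ k := by gcongr; exact hc k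
    _ = _ := by ring

def IsEntireSeries (a : ℕ → ℝ) (n : ℕ → ℕ) : Prop :=
  ∀ R : ℝ, 0 < R → Summable fun k => |a k| * R ^ n k

noncomputable def monomialSum (a : ℕ → ℝ) (n : ℕ → ℕ) (x : ℝ) : ℝ := ∑' k, a k * x ^ n k

namespace IsEntireSeries

variable {a : ℕ → ℝ} {n : ℕ → ℕ}

theorem of_hasFactorialDecay {p j : ℕ} (ha : HasFactorialDecay a) (hn : ∀ k, n k ≤ p * k + j) :
    IsEntireSeries a n := by
  obtain ⟨C, r, ha⟩ := ha
  intro R hR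
  set M := max R 1
  have hM : 1 ≤ M := le_max_right _ _
  refine ((Real.summable_pow_div_factorial (r * M ^ p)).mul_left (C * M ^ j)).of_nonneg_of_le
    (fun k => by positivity) (fun k => ?_)
  have hRM : R ^ n k ≤ M ^ (p * k + j) :=
    (pow_le_pow_left₀ hR.le (le_max_left _ _) _).trans (pow_le_pow_right₀ hM (hn k))
  calc |a k| * R ^ n k ≤ C * r ^ k / k ! * M ^ (p * k + j) :=
        mul_le_mul (ha k) hRM (by positivity) ((abs_nonneg _).trans (ha k))
    _ = C * M ^ j * ((r * M ^ p) ^ k / k !) := by rw [pow_add, pow_mul]; ring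

theorem summable (h : IsEntireSeries a n) (x : ℝ) : Summable fun k => a k * x ^ n k := by
  refine .of_norm_bounded (h (|x| + 1) (by positivity)) fun k => ?_
  simp only [norm_mul, norm_pow, Real.norm_eq_abs]
  gcongr
  linarith

theorem derivSeries (h : IsEntireSeries a n) :
    IsEntireSeries (fun k => a k * n k) (fun k => n k - 1) := by
  intro R hR
  set M := max R 1
  have hM : 1 ≤ M := le_max_right _ _
  refine (h (2 * M) (by positivity)).of_nonneg_of_le (fun k => by positivity) fun k => ?_
  calc |a k * n k| * R ^ (n k - 1) = |a k| * (n k * R ^ (n k - 1)) := by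
        rw [abs_mul, Nat.abs_cast, mul_assoc]
    _ ≤ |a k| * (2 ^ n k * M ^ n k) := by
        gcongr
        · exact_mod_cast (Nat.lt_two_pow_self).le
        · exact (pow_le_pow_left₀ hR.le (le_max_left _ _) _).trans
            (pow_le_pow_right₀ hM (Nat.sub_le _ _))
    _ = |a k| * (2 * M) ^ n k := by rw [mul_pow]

theorem hasDerivAt (h : IsEntireSeries a n) (x : ℝ) :
    HasDerivAt (monomialSum a n) (monomialSum (fun k => a k * n k) (fun k => n k - 1) x) x := by
  set R := |x| + 1
  have hx : x ∈ Set.Ioo (-R) R := abs_lt.1 (by linarith)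
  have hderiv : ∀ k y, HasDerivAt (fun z => a k * z ^ n k) (a k * n k * y ^ (n k - 1)) y :=
    fun k y => by simpa [mul_assoc] using (hasDerivAt_pow (n k) y).const_mul (a k)
  refine hasDerivAt_tsum_of_isPreconnected (h.derivSeries R (by positivity)) isOpen_Ioo
    isPreconnected_Ioo (fun k y _ => hderiv k y) (fun k y hy => ?_) hx (h.summable x) hx
  rw [norm_mul, norm_pow, Real.norm_eq_abs, Real.norm_eq_abs]
  gcongr
  exact abs_le.2 ⟨hy.1.le, hy.2.le⟩

theorem deriv_monomialSum (h : IsEntireSeries a n) :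
    deriv (monomialSum a n) = monomialSum (fun k => a k * n k) (fun k => n k - 1) :=
  funext fun x => (h.hasDerivAt x).deriv

theorem iterate_derivSeries (h : IsEntireSeries a n) (i : ℕ) :
    IsEntireSeries (fun k => a k * (n k).descFactorial i) (fun k => n k - i) := by
  induction i with
  | zero => simpa using h
  | succ i ih =>
    convert ih.derivSeries using 2 with k
    · rw [Nat.descFactorial_succ, Nat.cast_mul, mul_comm ((n k - i : ℕ) : ℝ), mul_assoc]
    · omega

theorem iteratedDeriv_monomialSum (h : IsEntireSeries a n) (i : ℕ) :
    iteratedDeriv i (monomialSum a n) =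
      monomialSum (fun k => a k * (n k).descFactorial i) (fun k => n k - i) := by
  induction i with
  | zero => simp
  | succ i ih =>
    rw [iteratedDeriv_succ, ih, (h.iterate_derivSeries i).deriv_monomialSum]
    congr 1
    funext k
    rw [Nat.descFactorial_succ, Nat.cast_mul, mul_comm ((n k - i : ℕ) : ℝ), mul_assoc]

theorem contDiff (h : IsEntireSeries a n) {N : ℕ∞} : ContDiff ℝ N (monomialSum a n) :=
  contDiff_of_differentiable_iteratedDeriv fun i _ => by
    rw [h.iteratedDeriv_monomialSum i]
    exact fun x => ((h.iterate_derivSeries i).hasDerivAt x).differentiableAt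

end IsEntireSeries

noncomputable def selfSimilarSeries (p j : ℕ) (e : ℝ) (c : ℕ → ℝ) (x t : ℝ) : ℝ :=
  t ^ e * x ^ j * ∑' k, c k * (x ^ p / t) ^ k

section SelfSimilarSeries

variable {p j : ℕ} {e : ℝ} {c : ℕ → ℝ}

theorem selfSimilarSeries_eq_monomialSum (t : ℝ) :
    (fun x => selfSimilarSeries p j e c x t) =
      monomialSum (fun k => t ^ e * c k * t⁻¹ ^ k) (fun k => p * k + j) := by
  funext x
  rw [selfSimilarSeries, monomialSum, ← tsum_mul_left]
  congr 1
  funext k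
  rw [div_eq_mul_inv, mul_pow, pow_add, pow_mul]
  ring

theorem isEntireSeries_selfSimilarSeries_space (hc : HasFactorialDecay c) (t : ℝ) :
    IsEntireSeries (fun k => t ^ e * c k * t⁻¹ ^ k) (fun k => p * k + j) :=
  .of_hasFactorialDecay (hc.mul_pow _ _) fun _ => le_rfl

theorem contDiff_selfSimilarSeries_space (hc : HasFactorialDecay c) (t : ℝ) {N : ℕ∞} :
    ContDiff ℝ N fun x => selfSimilarSeries p j e c x t := by
  rw [selfSimilarSeries_eq_monomialSum]
  exact (isEntireSeries_selfSimilarSeries_space hc t).contDiff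

theorem iteratedDeriv_selfSimilarSeries (hj : j < p) (hc : HasFactorialDecay c) (x t : ℝ) :
    iteratedDeriv p (fun y => selfSimilarSeries p j e c y t) x =
      ∑' k, t ^ e * t⁻¹ ^ (k + 1) * x ^ (p * k + j) *
        (c (k + 1) * (p * (k + 1) + j).descFactorial p) := by
  have hent := isEntireSeries_selfSimilarSeries_space (p := p) (j := j) (e := e) hc t
  rw [selfSimilarSeries_eq_monomialSum, hent.iteratedDeriv_monomialSum, monomialSum,
    ((hent.iterate_derivSeries p).summable x).tsum_eq_zero_add]
  have hj0 : j.descFactorial p = 0 := Nat.descFactorial_eq_zero_iff_lt.2 hj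
  have hexp : ∀ k, p * (k + 1) + j - p = p * k + j := fun k => by rw [mul_add, mul_one]; omega
  simp only [hj0, Nat.cast_zero, mul_zero, zero_mul, zero_add, hexp]
  congr 1
  funext k
  ring

theorem selfSimilarSeries_eq_rpow_mul_monomialSum_inv (x t : ℝ) :
    selfSimilarSeries p j e c x t =
      t ^ e * x ^ j * monomialSum (fun k => c k * (x ^ p) ^ k) (fun k => k) t⁻¹ := by
  simp only [selfSimilarSeries, monomialSum, div_eq_mul_inv, mul_pow, mul_assoc]

-- In `t` the series is `t ^ e * x ^ j` times an entire power series in `t⁻¹`.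
theorem hasDerivAt_selfSimilarSeries_time (hc : HasFactorialDecay c) (x : ℝ) {t : ℝ}
    (ht : 0 < t) :
    HasDerivAt (selfSimilarSeries p j e c x)
      (∑' k, t ^ e * t⁻¹ ^ (k + 1) * x ^ (p * k + j) * ((e - k) * c k)) t := by
  set b := fun k => c k * (x ^ p) ^ k
  have hb : IsEntireSeries b fun k => k :=
    .of_hasFactorialDecay (p := 1) (j := 0) (by simpa using hc.mul_pow 1 (x ^ p)) fun k => by simp
  have hderiv : HasDerivAt (fun s => s ^ e * x ^ j * monomialSum b (fun k => k) s⁻¹)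
      (e * t ^ (e - 1) * x ^ j * monomialSum b (fun k => k) t⁻¹ +
        t ^ e * x ^ j * (monomialSum (fun k => b k * k) (fun k => k - 1) t⁻¹ * -(t ^ 2)⁻¹)) t :=
    ((Real.hasDerivAt_rpow_const (Or.inl ht.ne')).mul_const (x ^ j)).mul
      ((hb.hasDerivAt t⁻¹).comp t (hasDerivAt_inv ht.ne'))
  rw [show selfSimilarSeries p j e c x = _ from
    funext (selfSimilarSeries_eq_rpow_mul_monomialSum_inv x)]
  refine hderiv.congr_deriv ?_
  rw [monomialSum, monomialSum, ← tsum_mul_left, ← tsum_mul_right, ← tsum_mul_left,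
    ← ((hb.summable _).mul_left _).tsum_add (((hb.derivSeries.summable _).mul_right _).mul_left _)]
  refine tsum_congr fun k => ?_
  rw [Real.rpow_sub_one ht.ne', pow_add x, pow_mul]
  rcases k with _ | k
  · simp only [b, pow_zero, mul_one, CharP.cast_eq_zero, mul_zero, zero_tsub, mul_neg, zero_mul,
      neg_zero, add_zero, zero_add, pow_one, one_mul, sub_zero]
    field_simp
  · simp only [b, Nat.add_sub_cancel, inv_pow]
    push_cast
    field_simp
    ring

theorem hasDerivAt_selfSimilarSeries_of_recurrence (hj : j < p) (hc : HasFactorialDecay c)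
    {B : ℝ} (hrec : ∀ k : ℕ, (e - k) * c k = -B * (c (k + 1) * (p * (k + 1) + j).descFactorial p))
    (x : ℝ) {t : ℝ} (ht : 0 < t) :
    HasDerivAt (selfSimilarSeries p j e c x)
      (-B * iteratedDeriv p (fun y => selfSimilarSeries p j e c y t) x) t := by
  rw [iteratedDeriv_selfSimilarSeries hj hc, ← tsum_mul_left]
  refine (hasDerivAt_selfSimilarSeries_time hc x ht).congr_deriv (tsum_congr fun k => ?_)
  rw [hrec]
  ring

end SelfSimilarSeries

theorem poch_succ (a : ℝ) (k : ℕ) : poch a (k + 1) = poch a k * (a + k) :=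
  Finset.prod_range_succ _ _

theorem poch_nonneg {a : ℝ} (ha : 0 ≤ a) (k : ℕ) : 0 ≤ poch a k :=
  Finset.prod_nonneg fun _ _ => by positivity

theorem abs_poch_le {a b : ℝ} (hab : |a| ≤ b) (k : ℕ) : |poch a k| ≤ poch b k := by
  rw [poch, poch, Finset.abs_prod]
  refine Finset.prod_le_prod (fun _ _ => abs_nonneg _) fun i _ => ?_
  calc |a + i| ≤ |a| + i := by simpa using abs_add_le a (i : ℝ)
    _ ≤ b + i := by linarith

theorem min_one_le_poch {a : ℝ} (ha : 0 < a) (k : ℕ) : min a 1 ≤ poch a k := by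
  rcases k with _ | k
  · simp [poch]
  · have h1 : 1 ≤ poch (a + 1) k := Finset.one_le_prod fun i _ => by
      have : (0 : ℝ) ≤ i := i.cast_nonneg
      linarith
    calc min a 1 ≤ 1 * a := by simp
      _ ≤ poch (a + 1) k * a := by gcongr
      _ = poch a (k + 1) := by
        rw [poch, poch, Finset.prod_range_succ']
        push_cast
        simp only [add_assoc, add_comm (1 : ℝ), add_zero]

noncomputable def hyperCoeff (a b₁ b₂ b₃ : ℝ) (k : ℕ) : ℝ :=
  poch a k / (poch b₁ k * poch b₂ k * poch b₃ k) / k !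

theorem F13_eq_tsum (a b₁ b₂ b₃ z : ℝ) :
    F13 a b₁ b₂ b₃ z = ∑' k, hyperCoeff a b₁ b₂ b₃ k * z ^ k :=
  tsum_congr fun k => by rw [hyperCoeff]; ring

theorem hyperCoeff_succ (a b₁ b₂ b₃ : ℝ) (k : ℕ) :
    hyperCoeff a b₁ b₂ b₃ (k + 1) =
      hyperCoeff a b₁ b₂ b₃ k * (a + k) / ((b₁ + k) * (b₂ + k) * (b₃ + k) * (k + 1)) := by
  simp only [hyperCoeff, poch_succ, Nat.factorial_succ, Nat.cast_mul, Nat.cast_succ]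
  -- keep the new factors atomic, so that `ring` does not expand the products under `⁻¹`
  generalize a + k = α
  generalize b₁ + k = β₁
  generalize b₂ + k = β₂
  generalize b₃ + k = β₃
  generalize (k : ℝ) + 1 = κ
  ring

theorem abs_hyperCoeff_le {a b₁ b₂ b₃ : ℝ} (h₁ : |a| ≤ b₁) (h₂ : 0 < b₂) (h₃ : 0 < b₃) (k : ℕ) :
    |hyperCoeff a b₁ b₂ b₃ k| ≤ (min b₂ 1 * min b₃ 1)⁻¹ / k ! := by
  have hb₁ := poch_nonneg ((abs_nonneg a).trans h₁) k
  have hD : 0 ≤ poch b₁ k * poch b₂ k * poch b₃ k :=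
    mul_nonneg (mul_nonneg hb₁ (poch_nonneg h₂.le k)) (poch_nonneg h₃.le k)
  have hm : 0 < min b₂ 1 * min b₃ 1 := by positivity
  have hpoch : min b₂ 1 * min b₃ 1 ≤ poch b₂ k * poch b₃ k :=
    mul_le_mul (min_one_le_poch h₂ k) (min_one_le_poch h₃ k) (by positivity)
      (poch_nonneg h₂.le k)
  have hratio : |poch a k| / poch b₁ k ≤ 1 := div_le_one_of_le₀ (abs_poch_le h₁ k) hb₁
  rw [hyperCoeff, abs_div, abs_div, abs_of_nonneg (by positivity : (0 : ℝ) ≤ k !),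
    abs_of_nonneg hD]
  gcongr
  calc |poch a k| / (poch b₁ k * poch b₂ k * poch b₃ k)
      = |poch a k| / poch b₁ k * (poch b₂ k * poch b₃ k)⁻¹ := by ring
    _ ≤ 1 * (min b₂ 1 * min b₃ 1)⁻¹ := by gcongr; exact inv_nonneg.2 (hm.le.trans hpoch)
    _ = _ := one_mul _

theorem hasFactorialDecay_hyperCoeff {a b₁ b₂ b₃ : ℝ} (h₁ : |a| ≤ b₁) (h₂ : 0 < b₂)
    (h₃ : 0 < b₃) : HasFactorialDecay (hyperCoeff a b₁ b₂ b₃) :=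
  ⟨_, 1, fun k => by simpa using abs_hyperCoeff_le h₁ h₂ h₃ k⟩

theorem selfSimilarSeries_mul_hyperCoeff (p j : ℕ) (e K a b₁ b₂ b₃ l x t : ℝ) :
    selfSimilarSeries p j e (fun k => K * hyperCoeff a b₁ b₂ b₃ k * l ^ k) x t =
      t ^ e * x ^ j * (K * F13 a b₁ b₂ b₃ (l * (x ^ p / t))) := by
  simp only [selfSimilarSeries, F13_eq_tsum, ← tsum_mul_left]
  exact tsum_congr fun k => by ring

theorem cast_descFactorial_four (n : ℕ) :
    ((n + 4).descFactorial 4 : ℝ) = (n + 1) * (n + 2) * (n + 3) * (n + 4) := by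
  simp only [Nat.descFactorial_succ, Nat.reduceSubDiff, Nat.add_one_sub_one, tsub_zero,
    Nat.descFactorial_zero, mul_one, Nat.cast_mul, Nat.cast_add, Nat.cast_one, Nat.cast_ofNat]
  ring

noncomputable def mullinsCoeff₁ (m B : ℝ) (k : ℕ) : ℝ :=
  -(m / (4 * Real.sqrt 2 * B ^ ((1:ℝ)/4) * Real.Gamma (3/4))) *
    hyperCoeff (1/4) (3/4) (5/4) (3/2) k * (256 * B)⁻¹ ^ k

noncomputable def mullinsCoeff₂ (m B : ℝ) (k : ℕ) : ℝ :=
  -(m * B ^ ((1:ℝ)/4) / (2 * Real.sqrt 2 * Real.Gamma (5/4))) *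
    hyperCoeff (-1/4) (1/4) (1/2) (3/4) k * (256 * B)⁻¹ ^ k

theorem hasFactorialDecay_mullinsCoeff₁ (m B : ℝ) : HasFactorialDecay (mullinsCoeff₁ m B) :=
  (hasFactorialDecay_hyperCoeff (by norm_num [abs_of_pos]) (by norm_num) (by norm_num)).mul_pow
    _ _

theorem hasFactorialDecay_mullinsCoeff₂ (m B : ℝ) : HasFactorialDecay (mullinsCoeff₂ m B) :=
  (hasFactorialDecay_hyperCoeff (by norm_num [abs_of_pos]) (by norm_num) (by norm_num)).mul_pow
    _ _

theorem mullinsCoeff₁_recurrence (m : ℝ) {B : ℝ} (hB : B ≠ 0) (k : ℕ) :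
    (-1/4 - k) * mullinsCoeff₁ m B k =
      -B * (mullinsCoeff₁ m B (k + 1) * (4 * (k + 1) + 2).descFactorial 4) := by
  rw [show 4 * (k + 1) + 2 = 4 * k + 2 + 4 by ring, cast_descFactorial_four]
  simp only [mullinsCoeff₁, hyperCoeff_succ, pow_succ]
  push_cast
  field_simp
  ring

theorem mullinsCoeff₂_recurrence (m : ℝ) {B : ℝ} (hB : B ≠ 0) (k : ℕ) :
    (1/4 - k) * mullinsCoeff₂ m B k =
      -B * (mullinsCoeff₂ m B (k + 1) * (4 * (k + 1) + 0).descFactorial 4) := by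
  rw [show 4 * (k + 1) + 0 = 4 * k + 4 by ring, cast_descFactorial_four]
  simp only [mullinsCoeff₂, hyperCoeff_succ, pow_succ]
  push_cast
  field_simp
  ring

theorem mullinsY_eq_add_selfSimilarSeries (m : ℝ) {B : ℝ} (hB : 0 < B) (x : ℝ) {t : ℝ}
    (ht : 0 < t) :
    mullinsY m B x t = m / 2 * x + selfSimilarSeries 4 2 (-1/4) (mullinsCoeff₁ m B) x t +
      selfSimilarSeries 4 0 (1/4) (mullinsCoeff₂ m B) x t := by
  unfold mullinsCoeff₁ mullinsCoeff₂
  rw [mullinsY, selfSimilarSeries_mul_hyperCoeff, selfSimilarSeries_mul_hyperCoeff,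
    show (256 * B)⁻¹ * (x ^ 4 / t) = x ^ 4 / (256 * B * t) by ring,
    Real.mul_rpow hB.le ht.le, show (-1/4 : ℝ) = -(1/4) by norm_num, Real.rpow_neg ht.le]
  have : 0 < B ^ ((1:ℝ)/4) := by positivity
  have : 0 < t ^ ((1:ℝ)/4) := by positivity
  have : 0 < Real.Gamma (3/4) := Real.Gamma_pos_of_pos (by norm_num)
  have : 0 < Real.Gamma (5/4) := Real.Gamma_pos_of_pos (by norm_num)
  field_simp
  ring

theorem iteratedDeriv_four_mullinsY (m : ℝ) {B : ℝ} (hB : 0 < B) (x : ℝ) {t : ℝ} (ht : 0 < t) :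
    iteratedDeriv 4 (fun x' => mullinsY m B x' t) x =
      iteratedDeriv 4 (fun y => selfSimilarSeries 4 2 (-1/4) (mullinsCoeff₁ m B) y t) x +
        iteratedDeriv 4 (fun y => selfSimilarSeries 4 0 (1/4) (mullinsCoeff₂ m B) y t) x := by
  have hlin : iteratedDeriv 4 (fun y => m / 2 * y) x = 0 := by
    rw [iteratedDeriv_const_mul_field, iteratedDeriv_fun_id]
    norm_num
  have hS₁ := contDiff_selfSimilarSeries_space (p := 4) (j := 2) (e := -1/4)
    (hasFactorialDecay_mullinsCoeff₁ m B) t (N := 4)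
  have hS₂ := contDiff_selfSimilarSeries_space (p := 4) (j := 0) (e := 1/4)
    (hasFactorialDecay_mullinsCoeff₂ m B) t (N := 4)
  rw [funext fun x' => mullinsY_eq_add_selfSimilarSeries m hB x' ht, iteratedDeriv_fun_add,
    iteratedDeriv_fun_add, hlin, zero_add]
  · fun_prop
  · exact hS₁.contDiffAt
  · exact (contDiffAt_const.mul contDiffAt_id).add hS₁.contDiffAt
  · exact hS₂.contDiffAt

theorem mullinsY_satisfies_mullins_equation_general (m B : ℝ) (hB : 0 < B)
    (x t : ℝ) (ht : 0 < t) :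
    deriv (fun s : ℝ => mullinsY m B x s) t
      = -B * iteratedDeriv 4 (fun x' : ℝ => mullinsY m B x' t) x := by
  have h₁ := hasDerivAt_selfSimilarSeries_of_recurrence (by norm_num)
    (hasFactorialDecay_mullinsCoeff₁ m B) (mullinsCoeff₁_recurrence m hB.ne') x ht
  have h₂ := hasDerivAt_selfSimilarSeries_of_recurrence (by norm_num)
    (hasFactorialDecay_mullinsCoeff₂ m B) (mullinsCoeff₂_recurrence m hB.ne') x ht
  have hrepr : (fun s => mullinsY m B x s) =ᶠ[𝓝 t] fun s => m / 2 * x +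
      selfSimilarSeries 4 2 (-1/4) (mullinsCoeff₁ m B) x s +
      selfSimilarSeries 4 0 (1/4) (mullinsCoeff₂ m B) x s := by
    filter_upwards [Ioi_mem_nhds ht] with s hs
    exact mullinsY_eq_add_selfSimilarSeries m hB x hs
  rw [hrepr.deriv_eq, (((hasDerivAt_const t (m / 2 * x)).fun_add h₁).fun_add h₂).deriv,
    iteratedDeriv_four_mullinsY m hB x ht]
  ring

/-- The Mullins profile `y₀` satisfies `∂y₀/∂t = -B ∂⁴y₀/∂x⁴` for `x > 0`, `t > 0`. -/
theorem mullinsY_satisfies_mullins_equation (m B : ℝ) (hB : 0 < B)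
    (x t : ℝ) (hx : 0 < x) (ht : 0 < t) :
    deriv (fun s : ℝ => mullinsY m B x s) t
      = -B * iteratedDeriv 4 (fun x' : ℝ => mullinsY m B x' t) x :=
  mullinsY_satisfies_mullins_equation_general m B hB x t ht
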